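/- arXiv:2209.04591 — 2 statements merged into one kernel-verified Lean document; each statement's English description precedes it below -/
import Mathlib

section
/- Let G be a finite group with trivial center and θ an irreducible character of G of degree n over a field F, arising from a faithful absolutely irreducible F-representation X: G → GL_n(F). Let N be the normalizer and Z the centralizer of X(G) in GL_n(F). Then N/Z is isomorphic to the inertia group I_{Aut(G)}(θ) = {α ∈ Aut(G) : θ∘α = θ}. -/
/-!
Conjugation by `u ∈ N` induces an automorphism of `G ≅ X(G)`; it fixes `θ` because the trace
is invariant under conjugation, and it is trivial exactly when `u ∈ Z`. Conversely let `α` fix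
`θ`. By Burnside's theorem (Jacobson density for the simple module `V` with commutant `F`), `X`
and `X ∘ α` extend to surjections `F[G] → End_F(V)`. As the trace form of `End_F(V)` is
nondegenerate, `c ∈ F[G]` lies in the kernel iff `tr X(cd) = 0` for all `d`, a condition on `θ`
alone. Hence both kernels agree, `X(g) ↦ X(α g)` is an `F`-algebra automorphism of `End_F(V)`,
and by Skolem–Noether it is conjugation by some `u ∈ GL(V)`, which normalizes `X(G)` and
induces `α`.
-/

variable {F : Type} [Field F] {V : Type} [AddCommGroup V] [Module F V]
  {G : Type} [Group G]

/-- The inertia group of a character `θ : G → F` in `Aut(G)`: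
automorphisms `α` with `θ ∘ α = θ`. -/
def inertia (θ : G → F) : Subgroup (MulAut G) where
  carrier := {α | ∀ g, θ (α g) = θ g}
  one_mem' := fun _ => rfl
  mul_mem' := fun {a b} ha hb g => by
    simpa [hb g] using ha (b g)
  inv_mem' := fun {a} ha g => by
    simpa using (ha (a⁻¹ g)).symm

open Module
open LinearMap (trace)

theorem Subalgebra.eq_top_of_absolutelyIrreducible [FiniteDimensional F V]
    (A : Subalgebra F (End F V))
    (hirr : ∀ W : Submodule F V, (∀ a ∈ A, ∀ v ∈ W, a v ∈ W) → W = ⊥ ∨ W = ⊤)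
    (habs : ∀ f : End F V, (∀ a ∈ A, f * a = a * f) → ∃ c : F, f = c • 1) :
    A = ⊤ := by
  have : IsSemisimpleModule A V := by
    refine { exists_isCompl := fun p => ?_ }
    obtain rfl | rfl : p = ⊥ ∨ p = ⊤ := by
      simpa using hirr (p.restrictScalars F) fun a ha v hv => p.smul_mem ⟨a, ha⟩ hv
    exacts [⟨⊤, isCompl_bot_top⟩, ⟨⊥, isCompl_top_bot⟩]
  classical
  refine eq_top_iff.mpr fun g _ => ?_
  have hg : ∀ (φ : End A V) (v : V), g (φ v) = φ (g v) := by
    intro φ v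
    obtain ⟨c, hc⟩ := habs (φ.restrictScalars F) fun a ha =>
      LinearMap.ext fun w => φ.map_smul ⟨a, ha⟩ w
    have hφ : ∀ w, φ w = c • w := fun w => by simpa using LinearMap.congr_fun hc w
    rw [hφ, hφ, map_smul]
  let f : End (End A V) V := { toFun := g, map_add' := g.map_add, map_smul' := hg }
  let b := finBasis F V
  obtain ⟨r, hr⟩ := jacobson_density f (Finset.univ.image b)
  have hgr : g = r := b.ext fun i => hr (b i) (Finset.mem_image_of_mem b (Finset.mem_univ i))
  exact hgr ▸ r.2

theorem LinearMap.eq_zero_of_forall_trace_mul_eq_zero [FiniteDimensional F V] {m : End F V}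
    (h : ∀ f, trace F V (m * f) = 0) : m = 0 := by
  by_contra! hm
  obtain ⟨x, hx⟩ : ∃ x, m x ≠ 0 := by
    by_contra! h'
    exact hm (LinearMap.ext h')
  obtain ⟨ψ, hψ⟩ := Projective.exists_dual_eq_one F hx
  have hmul : m * ψ.smulRight x = ψ.smulRight (m x) := LinearMap.ext fun v => by simp
  simpa [hmul, hψ] using h (ψ.smulRight x)

namespace Representation
variable {M : Type*} [Monoid M]

theorem asAlgebraHom_surjective_of_absolutelyIrreducible [FiniteDimensional F V]
    (ρ : Representation F M V)
    (hirr : ∀ W : Submodule F V, (∀ g, ∀ v ∈ W, ρ g v ∈ W) → W = ⊥ ∨ W = ⊤)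
    (habs : ∀ f : End F V, (∀ g, f * ρ g = ρ g * f) → ∃ c : F, f = c • 1) :
    Function.Surjective ρ.asAlgebraHom := by
  have hmem (g : M) : ρ g ∈ ρ.asAlgebraHom.range := ⟨MonoidAlgebra.single g 1, by simp⟩
  rw [← AlgHom.range_eq_top]
  exact Subalgebra.eq_top_of_absolutelyIrreducible _ (fun W hW => hirr W fun g => hW _ (hmem g))
    fun f hf => habs f fun g => hf _ (hmem g)

theorem trace_asAlgebraHom_eq_of_trace_eq {ρ σ : Representation F M V}
    (htr : ∀ g, trace F V (ρ g) = trace F V (σ g)) (c : MonoidAlgebra F M) :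
    trace F V (ρ.asAlgebraHom c) = trace F V (σ.asAlgebraHom c) :=
  LinearMap.congr_fun (f := trace F V ∘ₗ ρ.asAlgebraHom.toLinearMap)
    (g := trace F V ∘ₗ σ.asAlgebraHom.toLinearMap)
    (MonoidAlgebra.lhom_ext' fun g => LinearMap.ext_ring (by simpa using htr g)) c

theorem mem_ker_asAlgebraHom_iff [FiniteDimensional F V] {ρ : Representation F M V}
    (hρ : Function.Surjective ρ.asAlgebraHom) {c : MonoidAlgebra F M} :
    c ∈ RingHom.ker ρ.asAlgebraHom ↔ ∀ d, trace F V (ρ.asAlgebraHom (c * d)) = 0 := by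
  refine ⟨fun hc d => by simp_all, fun h => ?_⟩
  refine RingHom.mem_ker.mpr (LinearMap.eq_zero_of_forall_trace_mul_eq_zero fun f => ?_)
  obtain ⟨d, rfl⟩ := hρ f
  simpa using h d

theorem ker_asAlgebraHom_eq_of_trace_eq [FiniteDimensional F V] {ρ σ : Representation F M V}
    (hρ : Function.Surjective ρ.asAlgebraHom) (hσ : Function.Surjective σ.asAlgebraHom)
    (htr : ∀ g, trace F V (ρ g) = trace F V (σ g)) :
    RingHom.ker ρ.asAlgebraHom = RingHom.ker σ.asAlgebraHom := by
  ext c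
  simp only [mem_ker_asAlgebraHom_iff hρ, mem_ker_asAlgebraHom_iff hσ,
    trace_asAlgebraHom_eq_of_trace_eq htr]

theorem exists_conjAlgEquiv_eq_of_trace_eq [FiniteDimensional F V]
    {ρ σ : Representation F M V}
    (hρ : Function.Surjective ρ.asAlgebraHom) (hσ : Function.Surjective σ.asAlgebraHom)
    (htr : ∀ g, trace F V (ρ g) = trace F V (σ g)) :
    ∃ e : V ≃ₗ[F] V, ∀ g, e.conjAlgEquiv F (ρ g) = σ g := by
  let T : End F V ≃ₐ[F] End F V := (Ideal.quotientKerAlgEquivOfSurjective hρ).symm.trans <|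
    (Ideal.quotientEquivAlgOfEq F (ker_asAlgebraHom_eq_of_trace_eq hρ hσ htr)).trans
      (Ideal.quotientKerAlgEquivOfSurjective hσ)
  have hT (c) : T (ρ.asAlgebraHom c) = σ.asAlgebraHom c := by simp [T]
  obtain ⟨e, he⟩ := T.eq_linearEquivConjAlgEquiv
  exact ⟨e, fun g => by simpa [← he] using hT (MonoidAlgebra.single g 1)⟩

end Representation

namespace MonoidHom
variable {K : Type*} [Group K] {X : G →* K}

noncomputable def normalizerConj (hX : Function.Injective X) :
    Subgroup.normalizer (X.range : Set K) →* MulAut G :=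
  (MulAut.congr ((ofInjective hX).trans
    (Subgroup.subgroupOfEquivOfLe Subgroup.le_normalizer).symm)).symm.toMonoidHom.comp
    MulAut.conjNormal

theorem apply_normalizerConj (hX : Function.Injective X)
    (u : Subgroup.normalizer (X.range : Set K)) (g : G) :
    X (normalizerConj hX u g) = u * X g * (u : K)⁻¹ := by
  change X ((ofInjective hX).symm _) = _
  rw [apply_ofInjective_symm]
  rfl

theorem ker_normalizerConj (hX : Function.Injective X) :
    (normalizerConj hX).ker = (Subgroup.centralizer (X.range : Set K)).subgroupOf
      (Subgroup.normalizer (X.range : Set K)) := by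
  ext u
  rw [mem_ker, Subgroup.mem_subgroupOf, Subgroup.mem_centralizer_iff]
  constructor
  · rintro h _ ⟨g, rfl⟩
    have hg := apply_normalizerConj hX u g
    rwa [h, MulAut.one_apply, eq_mul_inv_iff_mul_eq] at hg
  · exact fun h => MulEquiv.ext fun g => hX <| by
      rw [apply_normalizerConj, ← h _ ⟨g, rfl⟩, mul_inv_cancel_right, MulAut.one_apply]

theorem mem_range_normalizerConj (hX : Function.Injective X) {α : MulAut G} {u : K}
    (hu : ∀ g, u * X g * u⁻¹ = X (α g)) : α ∈ (normalizerConj hX).range := by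
  have hN : u ∈ Subgroup.normalizer (X.range : Set K) := by
    refine Subgroup.mem_normalizer_iff.mpr fun k => ⟨?_, ?_⟩
    · rintro ⟨g, rfl⟩
      exact ⟨α g, (hu g).symm⟩
    · rintro ⟨g, hg⟩
      refine ⟨α.symm g, mul_left_cancel (a := u) (mul_right_cancel (b := u⁻¹) ?_)⟩
      rw [hu, MulEquiv.apply_symm_apply, hg]
  exact ⟨⟨u, hN⟩, MulEquiv.ext fun g => hX (by rw [apply_normalizerConj, hu])⟩

end MonoidHom

theorem normalizerConj_mem_inertia {X : G →* (End F V)ˣ} (hX : Function.Injective X)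
    (u : Subgroup.normalizer (X.range : Set (End F V)ˣ)) :
    MonoidHom.normalizerConj hX u ∈ inertia fun g => trace F V (X g : End F V) := fun g => by
  beta_reduce
  rw [MonoidHom.apply_normalizerConj, Units.val_mul, Units.val_mul, LinearMap.trace_conj]

theorem normalizer_quotient_centralizer_iso_inertia_general
    [FiniteDimensional F V]
    (X : G →* (Module.End F V)ˣ) (hfaith : Function.Injective X)
    (hirr : ∀ W : Submodule F V, (∀ (g : G), ∀ v ∈ W, (X g : Module.End F V) v ∈ W) →
      W = ⊥ ∨ W = ⊤)
    (habs : ∀ f : Module.End F V, (∀ g : G, f * (X g : Module.End F V) =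
      (X g : Module.End F V) * f) → ∃ c : F, f = c • (1 : Module.End F V)) :
    ∃ φ : (Subgroup.normalizer (X.range : Set (Module.End F V)ˣ)) →*
        (inertia (fun g => LinearMap.trace F V (X g : Module.End F V))),
      Function.Surjective φ ∧
        φ.ker = (Subgroup.centralizer (X.range : Set (Module.End F V)ˣ)).subgroupOf
          (Subgroup.normalizer (X.range : Set (Module.End F V)ˣ)) := by
  let ρ : Representation F G V := (Units.coeHom _).comp X
  have hsurj (α : MulAut G) :
      Function.Surjective (Representation.asAlgebraHom (ρ.comp α.toMonoidHom)) :=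
    Representation.asAlgebraHom_surjective_of_absolutelyIrreducible _
      (fun W hW => hirr W fun g => by simpa [ρ] using hW (α.symm g))
      (fun f hf => habs f fun g => by simpa [ρ] using hf (α.symm g))
  refine ⟨(MonoidHom.normalizerConj hfaith).codRestrict _ (normalizerConj_mem_inertia hfaith),
    fun ⟨α, hα⟩ => ?_, by rw [MonoidHom.ker_codRestrict, MonoidHom.ker_normalizerConj]⟩
  obtain ⟨e, he⟩ := Representation.exists_conjAlgEquiv_eq_of_trace_eq (hsurj 1) (hsurj α)
    fun g => (hα g).symm
  obtain ⟨u, hu⟩ := MonoidHom.mem_range_normalizerConj hfaith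
    (u := LinearMap.GeneralLinearGroup.ofLinearEquiv e) fun g => Units.ext (he g)
  exact ⟨u, Subtype.ext hu⟩

/-- Let `G` be a finite group with trivial centre and `X : G → GL(V)` a faithful
absolutely irreducible representation on an `n`-dimensional `F`-space `V`, with
character `θ = tr ∘ X`.  If `N` and `Z` are the normalizer and the centralizer of
`X(G)` in `GL(V)`, then `N/Z` is isomorphic to the inertia group
`I_{Aut(G)}(θ) = {α ∈ Aut(G) : θ ∘ α = θ}`. -/
theorem normalizer_quotient_centralizer_iso_inertia
    [Finite G] (hZG : Subgroup.center G = ⊥)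
    [FiniteDimensional F V] (n : ℕ) (hn : Module.finrank F V = n)
    (X : G →* (Module.End F V)ˣ) (hfaith : Function.Injective X)
    (hirr : ∀ W : Submodule F V, (∀ (g : G), ∀ v ∈ W, (X g : Module.End F V) v ∈ W) →
      W = ⊥ ∨ W = ⊤)
    (habs : ∀ f : Module.End F V, (∀ g : G, f * (X g : Module.End F V) =
      (X g : Module.End F V) * f) → ∃ c : F, f = c • (1 : Module.End F V)) :
    ∃ φ : (Subgroup.normalizer (X.range : Set (Module.End F V)ˣ)) →*
        (inertia (fun g => LinearMap.trace F V (X g : Module.End F V))),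
      Function.Surjective φ ∧
        φ.ker = (Subgroup.centralizer (X.range : Set (Module.End F V)ˣ)).subgroupOf
          (Subgroup.normalizer (X.range : Set (Module.End F V)ˣ)) :=
  normalizer_quotient_centralizer_iso_inertia_general X hfaith hirr habs
end

section
/- Let p be an odd prime dividing q−1 where q is a prime power, L = PSL_2(q), and P the permutation F_p L-module on the projective line over F_q (of dimension q+1). Then P decomposes as a direct sum P = I ⊕ V, where I is the one-dimensional trivial module and V is an irreducible F_p L-module of dimension q. -/
/-!
Since `p ∣ q - 1` and `p` is odd, `|ℙ¹(F_q)| = q + 1 ≡ 2` is a unit mod `p`, so the sum of all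
points spans a complement of the augmentation submodule `V`, which has dimension `q`.

For irreducibility, let `W ≤ V` be a nonzero invariant subspace. Moving a point of the support of
some `w ∈ W` to `∞`, we may assume `w(∞) ≠ 0`. The translations `t ↦ t + b` fix `∞` and permute
the affine line `F_q` regularly, so averaging `w` over them gives a vector that is constant off `∞`;
since its coordinates sum to zero it equals `w(∞) • (|ℙ¹| • [∞] - ∑ₓ [x])`. By transitivity, `W`
contains all the vectors `|ℙ¹| • [x] - ∑ᵧ [y]`, and these span `V` because `|ℙ¹|` is invertible.
-/

open scoped LinearAlgebra.Projectivization MatrixGroups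
open Matrix

variable {F : Type} [Field F]

theorem pmap_congr {V : Type} [AddCommGroup V] [Module F V] {f₁ f₂ : V →ₗ[F] V}
    (h : f₁ = f₂) (h₁ : Function.Injective f₁) (h₂ : Function.Injective f₂) :
    Projectivization.map f₁ h₁ = Projectivization.map f₂ h₂ := by subst h; rfl

noncomputable instance slAction :
    MulAction (SpecialLinearGroup (Fin 2) F) (ℙ F (Fin 2 → F)) where
  smul g := Projectivization.map (SpecialLinearGroup.toLin' g).toLinearMap
      (SpecialLinearGroup.toLin' g).injective
  one_smul x := by
    have h : ((SpecialLinearGroup.toLin' (1 : SpecialLinearGroup (Fin 2) F)).toLinearMap)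
        = LinearMap.id := by simp only [_root_.map_one]; rfl
    have := pmap_congr h (SpecialLinearGroup.toLin'
        (1 : SpecialLinearGroup (Fin 2) F)).injective (LinearEquiv.refl F _).injective
    show Projectivization.map _ _ x = x
    rw [this, Projectivization.map_id]
    rfl
  mul_smul a b x := by
    have h : ((SpecialLinearGroup.toLin' (a * b)).toLinearMap)
        = (SpecialLinearGroup.toLin' a).toLinearMap.comp
          (SpecialLinearGroup.toLin' b).toLinearMap := by
      simp only [_root_.map_mul]; rfl
    have := pmap_congr h (SpecialLinearGroup.toLin' (a * b)).injective
      ((SpecialLinearGroup.toLin' a).injective.comp (SpecialLinearGroup.toLin' b).injective)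
    show Projectivization.map _ _ x = Projectivization.map _ _ (Projectivization.map _ _ x)
    rw [this, Projectivization.map_comp]
    rfl

variable [Fintype F] [DecidableEq F]

theorem center_smul_eq (A : SpecialLinearGroup (Fin 2) F)
    (hA : A ∈ Subgroup.center (SpecialLinearGroup (Fin 2) F)) (x : ℙ F (Fin 2 → F)) :
    A • x = x := by
  induction x using Projectivization.ind with
  | h v hv =>
    obtain ⟨r, hr1, hr⟩ := Matrix.SpecialLinearGroup.mem_center_iff.mp hA
    show Projectivization.map _ _ _ = _
    rw [Projectivization.map_mk]
    rw [Projectivization.mk_eq_mk_iff']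
    refine ⟨r, ?_⟩
    have : (SpecialLinearGroup.toLin' A).toLinearMap v = Matrix.mulVec (↑A) v := by
      rfl
    rw [this, ← hr]
    have hsc : Matrix.scalar (Fin 2) r = r • (1 : Matrix (Fin 2) (Fin 2) F) := by
      rw [Matrix.scalar_apply, ← Matrix.smul_one_eq_diagonal]
    rw [hsc, Matrix.smul_mulVec, Matrix.one_mulVec]

noncomputable instance pslAction : MulAction (PSL(2, F)) (ℙ F (Fin 2 → F)) where
  smul g x := Quotient.liftOn' g (fun s => s • x) (fun a b hab => by
    have h : a⁻¹ * b ∈ Subgroup.center (SpecialLinearGroup (Fin 2) F) :=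
      QuotientGroup.leftRel_apply.mp hab
    show a • x = b • x
    conv_rhs => rw [show b = a * (a⁻¹ * b) by group]
    rw [mul_smul, center_smul_eq _ h])
  one_smul x := one_smul (SpecialLinearGroup (Fin 2) F) x
  mul_smul a b x := by
    refine Quotient.inductionOn₂' a b (fun a b => ?_)
    show (a * b) • x = a • (b • x)
    exact mul_smul a b x

theorem LinearMap.isCompl_span_singleton_ker {K V : Type*} [Field K] [AddCommGroup V]
    [Module K V] (f : V →ₗ[K] K) {x : V} (hx : f x ≠ 0) : IsCompl (K ∙ x) (LinearMap.ker f) :=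
  ⟨(Submodule.disjoint_span_singleton_of_notMem hx).symm,
    codisjoint_iff.mpr (f.span_singleton_sup_ker_eq_top hx)⟩

namespace PermutationModule

open Finsupp

variable {k G X : Type*} [Group G] [MulAction G X]

section Semiring

variable [Semiring k]

theorem coeff_ofMulAction_ofCoeff (g : G) (v : X →₀ k) :
    (Representation.ofMulAction k G X g (MonoidAlgebra.ofCoeff v)).coeff = v.mapDomain (g • ·) :=
  rfl

theorem mapDomain_smul_apply (g : G) (v : X →₀ k) (y : X) :
    v.mapDomain (g • ·) y = v (g⁻¹ • y) := by
  conv_lhs => rw [← smul_inv_smul g y]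
  exact mapDomain_apply (MulAction.injective g) v _

variable (k X) in
noncomputable def augmentation : (X →₀ k) →ₗ[k] k := linearCombination k fun _ ↦ 1

theorem augmentation_mapDomain (g : G) (v : X →₀ k) :
    augmentation k X (v.mapDomain (g • ·)) = augmentation k X v := by
  simp only [augmentation, linearCombination_mapDomain, Function.comp_def]

theorem mapDomain_mem_ker_augmentation (g : G) {v : X →₀ k}
    (hv : v ∈ LinearMap.ker (augmentation k X)) :
    v.mapDomain (g • ·) ∈ LinearMap.ker (augmentation k X) := by
  rwa [LinearMap.mem_ker, augmentation_mapDomain]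

variable [Fintype X]

theorem augmentation_apply (v : X →₀ k) : augmentation k X v = ∑ x, v x := by
  simp [augmentation, linearCombination_apply, sum_fintype]

variable (k X) in
noncomputable def pointSum : X →₀ k := equivFunOnFinite.symm 1

@[simp]
theorem pointSum_apply (x : X) : pointSum k X x = 1 := rfl

theorem mapDomain_pointSum (g : G) : (pointSum k X).mapDomain (g • ·) = pointSum k X := by
  ext y
  simp [mapDomain_smul_apply]

theorem mapDomain_eq_self_of_mem_span_pointSum (g : G) {v : X →₀ k} (hv : v ∈ k ∙ pointSum k X) :
    v.mapDomain (g • ·) = v := by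
  obtain ⟨c, rfl⟩ := Submodule.mem_span_singleton.mp hv
  rw [mapDomain_smul, mapDomain_pointSum]

theorem augmentation_pointSum : augmentation k X (pointSum k X) = Fintype.card X := by
  simp [augmentation_apply]

end Semiring

variable [Field k] [Fintype X]

section CardNeZero

variable (hX : (Fintype.card X : k) ≠ 0)
include hX

theorem isCompl_span_pointSum_ker_augmentation :
    IsCompl (k ∙ pointSum k X) (LinearMap.ker (augmentation k X)) :=
  (augmentation k X).isCompl_span_singleton_ker (by rwa [augmentation_pointSum])

theorem finrank_span_pointSum : Module.finrank k (k ∙ pointSum k X) = 1 :=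
  finrank_span_singleton fun h ↦ hX (by rw [← augmentation_pointSum, h, map_zero])

theorem finrank_ker_augmentation :
    Module.finrank k (LinearMap.ker (augmentation k X)) = Fintype.card X - 1 := by
  have := Submodule.finrank_add_eq_of_isCompl (isCompl_span_pointSum_ker_augmentation hX)
  rw [finrank_span_pointSum hX, Module.finrank_finsupp_self] at this
  omega

end CardNeZero

variable (k) in
noncomputable def centeredSingle (x : X) : X →₀ k :=
  single x (Fintype.card X : k) - pointSum k X

theorem centeredSingle_apply (x y : X) :
    centeredSingle k x y = single x (Fintype.card X : k) y - 1 := by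
  rw [centeredSingle, Finsupp.sub_apply, pointSum_apply]

theorem mapDomain_centeredSingle (g : G) (x : X) :
    (centeredSingle k x).mapDomain (g • ·) = centeredSingle k (g • x) := by
  rw [centeredSingle, mapDomain_sub, mapDomain_single, mapDomain_pointSum, centeredSingle]

theorem sum_smul_centeredSingle {v : X →₀ k} (hv : v ∈ LinearMap.ker (augmentation k X)) :
    ∑ x, v x • centeredSingle k x = (Fintype.card X : k) • v := by
  have hsum : ∑ x, v x = 0 := by rwa [← augmentation_apply]
  calc ∑ x, v x • centeredSingle k x
      = ∑ x, (Fintype.card X : k) • single x (v x) - (∑ x, v x) • pointSum k X := by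
        simp only [centeredSingle, smul_sub, Finset.sum_sub_distrib, Finset.sum_smul,
          Finsupp.smul_single, smul_eq_mul, mul_comm]
    _ = (Fintype.card X : k) • v := by
        rw [hsum, zero_smul, sub_zero, ← Finset.smul_sum, univ_sum_single]

theorem ker_augmentation_le_span_centeredSingle (hX : (Fintype.card X : k) ≠ 0) :
    LinearMap.ker (augmentation k X) ≤ Submodule.span k (Set.range (centeredSingle k)) := by
  intro v hv
  have hv' : v = (Fintype.card X : k)⁻¹ • ∑ x, v x • centeredSingle k x := by
    rw [sum_smul_centeredSingle hv, inv_smul_smul₀ hX]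
  rw [hv']
  exact Submodule.smul_mem _ _ <| Submodule.sum_mem _ fun x _ ↦
    Submodule.smul_mem _ _ (Submodule.subset_span (Set.mem_range_self x))

theorem eq_smul_centeredSingle_of_mem_ker {v : X →₀ k}
    (hv : v ∈ LinearMap.ker (augmentation k X)) {x₀ : X} {c : k} (h : ∀ y ≠ x₀, v y = -c) :
    v = c • centeredSingle k x₀ := by
  classical
  ext y
  rw [Finsupp.smul_apply, centeredSingle_apply, smul_eq_mul]
  by_cases hy : y = x₀
  · subst hy
    have hsum := Finset.add_sum_erase Finset.univ v (Finset.mem_univ y)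
    rw [← augmentation_apply, LinearMap.mem_ker.mp hv,
      Finset.sum_congr rfl fun x hx ↦ h x (Finset.ne_of_mem_erase hx), Finset.sum_const,
      Finset.card_erase_of_mem (Finset.mem_univ y), Finset.card_univ, nsmul_eq_mul,
      Nat.cast_pred (Fintype.card_pos_iff.mpr ⟨y⟩)] at hsum
    rw [single_eq_same]
    linear_combination hsum
  · rw [h y hy, single_eq_of_ne hy]
    ring

section Irreducible

variable {ι : Type*} [Fintype ι] {u : ι → G} {x₀ : X}

theorem sum_mapDomain_eq_smul_centeredSingle (hfix : ∀ i, u i • x₀ = x₀)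
    (hreg : ∀ x y, x ≠ x₀ → y ≠ x₀ → ∃! i, u i • x = y) {v : X →₀ k}
    (hv : v ∈ LinearMap.ker (augmentation k X)) :
    ∑ i, v.mapDomain (u i • ·) = v x₀ • centeredSingle k x₀ := by
  classical
  refine eq_smul_centeredSingle_of_mem_ker
    (Submodule.sum_mem _ fun i _ ↦ mapDomain_mem_ker_augmentation _ hv) fun y hy ↦ ?_
  have hsum := Finset.add_sum_erase Finset.univ v (Finset.mem_univ x₀)
  rw [← augmentation_apply, LinearMap.mem_ker.mp hv] at hsum
  have hne : ∀ i, (u i)⁻¹ • y ≠ x₀ := fun i h ↦ hy (by rw [← hfix i, ← h, smul_inv_smul])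
  calc (∑ i, v.mapDomain (u i • ·)) y = ∑ i, v ((u i)⁻¹ • y) := by
        simp only [Finsupp.finsetSum_apply, mapDomain_smul_apply]
    _ = ∑ x ∈ Finset.univ.erase x₀, v x := by
        refine Finset.sum_bij (fun i _ ↦ (u i)⁻¹ • y)
          (fun i _ ↦ Finset.mem_erase.mpr ⟨hne i, Finset.mem_univ _⟩)
          (fun i _ j _ hij ↦ (hreg _ y (hne i) hy).unique (smul_inv_smul _ y) ?_)
          (fun x hx ↦ ?_) fun _ _ ↦ rfl
        · rw [hij, smul_inv_smul]
        · obtain ⟨i, hi, -⟩ := hreg x y (Finset.ne_of_mem_erase hx) hy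
          exact ⟨i, Finset.mem_univ i, by rw [← hi, inv_smul_smul]⟩
    _ = -v x₀ := eq_neg_of_add_eq_zero_right hsum

variable (htrans : ∀ x, ∃ g : G, g • x₀ = x) (hfix : ∀ i, u i • x₀ = x₀)
  (hreg : ∀ x y, x ≠ x₀ → y ≠ x₀ → ∃! i, u i • x = y)
  {W : Submodule k (X →₀ k)} (hWV : W ≤ LinearMap.ker (augmentation k X))
  (hW : ∀ g : G, ∀ v ∈ W, v.mapDomain (g • ·) ∈ W)
include htrans hfix hreg hWV hW

theorem centeredSingle_mem_of_ne_bot (hbot : W ≠ ⊥) (x : X) : centeredSingle k x ∈ W := by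
  obtain ⟨w, hwW, hw⟩ := Submodule.exists_mem_ne_zero_of_ne_bot hbot
  obtain ⟨y, hy⟩ := Finsupp.ne_iff.mp hw
  obtain ⟨g, rfl⟩ := htrans y
  set w' := w.mapDomain (g⁻¹ • ·)
  have hw' : w' x₀ ≠ 0 := by rwa [mapDomain_smul_apply, inv_inv]
  have hsum : ∑ i, w'.mapDomain (u i • ·) ∈ W :=
    Submodule.sum_mem _ fun i _ ↦ hW _ _ (hW _ _ hwW)
  rw [sum_mapDomain_eq_smul_centeredSingle hfix hreg (hWV (hW _ _ hwW)),
    Submodule.smul_mem_iff _ hw'] at hsum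
  obtain ⟨h, rfl⟩ := htrans x
  rw [← mapDomain_centeredSingle]
  exact hW h _ hsum

theorem eq_bot_or_eq_ker_augmentation (hX : (Fintype.card X : k) ≠ 0) :
    W = ⊥ ∨ W = LinearMap.ker (augmentation k X) :=
  or_iff_not_imp_left.mpr fun hbot ↦ hWV.antisymm <|
    (ker_augmentation_le_span_centeredSingle hX).trans <| Submodule.span_le.mpr <|
      Set.range_subset_iff.mpr <| centeredSingle_mem_of_ne_bot htrans hfix hreg hWV hW hbot

end Irreducible

end PermutationModule

namespace ProjectiveLine

open OnePoint Projectivization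

section SpecialLinear

variable {K : Type} [Field K]

theorem SL_smul_mk_of_mulVec_eq (A : SL(2, K)) {v w : Fin 2 → K} (hv : v ≠ 0) (hw : w ≠ 0)
    (h : (A : Matrix (Fin 2) (Fin 2) K) *ᵥ v = w) : A • mk K v hv = mk K w hw := by
  subst h
  rfl

variable [DecidableEq K]

theorem exists_eq_equivProjectivization_coe {x : ℙ K (Fin 2 → K)}
    (hx : x ≠ equivProjectivization K ∞) : ∃ t : K, x = equivProjectivization K t := by
  obtain ⟨t, ht⟩ := ne_infty_iff_exists.mp fun h ↦ hx (by rw [← h, Equiv.apply_symm_apply])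
  exact ⟨t, by rw [ht, Equiv.apply_symm_apply]⟩

def translation (b : K) : SL(2, K) := ⟨!![1, b; 0, 1], by simp [det_fin_two_of]⟩

theorem translation_smul_infty (b : K) :
    translation b • equivProjectivization K ∞ = equivProjectivization K ∞ := by
  refine SL_smul_mk_of_mulVec_eq _ _ _ ?_
  ext i; fin_cases i <;> simp [translation]

theorem translation_smul_coe (b t : K) :
    translation b • equivProjectivization K t = equivProjectivization K ↑(t + b) := by
  refine SL_smul_mk_of_mulVec_eq _ _ _ ?_
  ext i; fin_cases i <;> simp [translation, add_comm]

theorem exists_SL_smul_infty_eq (x : ℙ K (Fin 2 → K)) :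
    ∃ A : SL(2, K), A • equivProjectivization K ∞ = x := by
  obtain ⟨t, rfl⟩ := (equivProjectivization K).surjective x
  induction t with
  | infty => exact ⟨1, one_smul _ _⟩
  | coe t =>
    refine ⟨(⟨!![t, -1; 1, 0], by simp [det_fin_two_of]⟩ : SL(2, K)), ?_⟩
    refine SL_smul_mk_of_mulVec_eq _ _ _ ?_
    ext i; fin_cases i <;> simp

end SpecialLinear

theorem exists_PSL_smul_infty_eq (x : ℙ F (Fin 2 → F)) :
    ∃ g : PSL(2, F), g • equivProjectivization F ∞ = x :=
  let ⟨A, hA⟩ := exists_SL_smul_infty_eq x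
  ⟨A, hA⟩

theorem PSL_translation_smul_infty (b : F) :
    (translation b : PSL(2, F)) • equivProjectivization F ∞ = equivProjectivization F ∞ :=
  translation_smul_infty b

theorem existsUnique_PSL_translation_smul_eq {x y : ℙ F (Fin 2 → F)}
    (hx : x ≠ equivProjectivization F ∞) (hy : y ≠ equivProjectivization F ∞) :
    ∃! b : F, (translation b : PSL(2, F)) • x = y := by
  obtain ⟨s, rfl⟩ := exists_eq_equivProjectivization_coe hx
  obtain ⟨t, rfl⟩ := exists_eq_equivProjectivization_coe hy
  refine ⟨t - s, (translation_smul_coe _ _).trans (by rw [add_sub_cancel]), fun b hb ↦ ?_⟩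
  replace hb : translation b • equivProjectivization F s = equivProjectivization F t := hb
  rw [translation_smul_coe, (equivProjectivization F).apply_eq_iff_eq, coe_eq_coe] at hb
  exact eq_sub_of_add_eq' hb

end ProjectiveLine

theorem Nat.Prime.not_dvd_add_one_of_dvd_sub_one {p q : ℕ} (hp : p.Prime) (hodd : p ≠ 2)
    (hq : q ≠ 0) (hdvd : p ∣ q - 1) : ¬p ∣ q + 1 := fun h ↦ by
  have h2 : p ∣ 2 := by simpa [show q + 1 - (q - 1) = 2 by omega] using Nat.dvd_sub h hdvd
  exact hodd ((Nat.prime_dvd_prime_iff_eq hp Nat.prime_two).mp h2)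

open PermutationModule ProjectiveLine OnePoint in
/-- Let `p` be an odd prime dividing `q - 1`, `L = PSL₂(q)`, and `P` the permutation
`F_p L`-module on the projective line over `F_q` (of dimension `q + 1`).  Then
`P = I ⊕ V` where `I` is the one-dimensional trivial module and `V` is an irreducible
`F_p L`-module of dimension `q`. -/
theorem permutation_module_decomposition (p : ℕ) (hp : p.Prime) (hodd : p ≠ 2)
    (hdvd : p ∣ (Fintype.card F - 1)) :
    ∃ I V : Submodule (ZMod p) (ℙ F (Fin 2 → F) →₀ ZMod p),
      IsCompl I V ∧
      (∀ (g : PSL(2, F)), ∀ v ∈ I,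
        (Representation.ofMulAction (ZMod p) (PSL(2, F)) (ℙ F (Fin 2 → F)) g (MonoidAlgebra.ofCoeff v)).coeff = v) ∧
      Module.finrank (ZMod p) I = 1 ∧
      (∀ (g : PSL(2, F)), ∀ v ∈ V,
        (Representation.ofMulAction (ZMod p) (PSL(2, F)) (ℙ F (Fin 2 → F)) g (MonoidAlgebra.ofCoeff v)).coeff ∈ V) ∧
      Module.finrank (ZMod p) V = Fintype.card F ∧
      (∀ W : Submodule (ZMod p) (ℙ F (Fin 2 → F) →₀ ZMod p), W ≤ V →
        (∀ (g : PSL(2, F)), ∀ v ∈ W,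
          (Representation.ofMulAction (ZMod p) (PSL(2, F)) (ℙ F (Fin 2 → F)) g (MonoidAlgebra.ofCoeff v)).coeff ∈ W) →
        W = ⊥ ∨ W = V) := by
  have : Fact p.Prime := ⟨hp⟩
  let : Fintype (ℙ F (Fin 2 → F)) := Fintype.ofFinite _
  have hcard : Fintype.card (ℙ F (Fin 2 → F)) = Fintype.card F + 1 := by
    simpa [Nat.card_eq_fintype_card] using
      Projectivization.card_of_finrank_two F (Fin 2 → F) (Module.finrank_fin_fun F)
  have hX : (Fintype.card (ℙ F (Fin 2 → F)) : ZMod p) ≠ 0 := by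
    rw [hcard, Ne, ZMod.natCast_eq_zero_iff]
    exact hp.not_dvd_add_one_of_dvd_sub_one hodd Fintype.card_ne_zero hdvd
  simp only [coeff_ofMulAction_ofCoeff]
  refine ⟨_, _, isCompl_span_pointSum_ker_augmentation hX,
    fun g _ ↦ mapDomain_eq_self_of_mem_span_pointSum g, finrank_span_pointSum hX,
    fun g _ ↦ mapDomain_mem_ker_augmentation g,
    by rw [finrank_ker_augmentation hX, hcard, Nat.add_sub_cancel],
    fun W hWV hW ↦ eq_bot_or_eq_ker_augmentation exists_PSL_smul_infty_eq
      PSL_translation_smul_infty (fun _ _ ↦ existsUnique_PSL_translation_smul_eq) hWV hW hX⟩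
end
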